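/- arXiv:1001.1247 — 2 statements merged into one kernel-verified Lean document; each statement's English description precedes it below -/
import Mathlib

section
/- Let Ω ⊆ ℝⁿ be a bounded Lipschitz domain satisfying the A-property: there exist A ≥ 1 and r₀ ∈ (0, min(d,1)) such that |B_r(x)| ≤ A|Ω ∩ B_r(x)| for all x ∈ Ω and 0 < r < r₀. Then there exists C > 0 (depending on A, r₀, n, and the diameter d of Ω) such that for every f ∈ BMO(Ω) ∩ L²(Ω), every x ∈ Ω, and every r ∈ (0, r₀): |f_{Ω_r(x)}| ≤ C(1 + |ln r|)(‖f‖_{L²(Ω)} + [f]_{BMO(Ω)}), where f_{Ω_r(x)} is the average of f over Ω ∩ B_r(x). -/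
open MeasureTheory Metric Set Module
open scoped ENNReal

/-!
Each doubling of the radius changes the average of `f` over `Ω ∩ B_ρ(x)` by at most
`2ⁿ A [f]_BMO`, since the A-property makes `ρ ↦ |Ω ∩ B_ρ(x)|` doubling below `r₀`. About
`log₂(r₀ / r) ≤ 2 |ln r|` doublings lead from `r` to a radius `R ∈ [r₀/2, r₀]`, where
`|Ω ∩ B_R(x)| ≥ |B_{r₀/2}| / A` bounds the average by a constant times `‖f‖_{L¹(Ω)}`, hence
by a constant times `‖f‖_{L²(Ω)}` since `Ω` is bounded.
-/

section Averages

variable {X : Type*} [MeasurableSpace X] {μ : Measure X} {s t : Set X} {g : X → ℝ}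

lemma abs_setAverage_le_of_subset (hst : s ⊆ t) (hg : IntegrableOn g t μ) :
    |⨍ y in s, g y ∂μ| ≤ (μ.real s)⁻¹ * ∫ y in t, |g y| ∂μ := by
  rw [setAverage_eq, smul_eq_mul, abs_mul, abs_of_nonneg (inv_nonneg.2 measureReal_nonneg)]
  gcongr
  calc |∫ y in s, g y ∂μ| ≤ ∫ y in s, |g y| ∂μ := abs_integral_le_integral_abs
    _ ≤ ∫ y in t, |g y| ∂μ :=
      setIntegral_mono_set hg.abs (ae_of_all _ fun y => abs_nonneg _) hst.eventuallyLE

lemma abs_setAverage_sub_setAverage_le (hst : s ⊆ t) (hs : μ s ≠ 0) (ht : μ t ≠ ∞)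
    (hg : IntegrableOn g t μ) {c K : ℝ} (hc : μ.real t ≤ c * μ.real s)
    (hK : ⨍ y in t, |g y - ⨍ z in t, g z ∂μ| ∂μ ≤ K) :
    |⨍ y in s, g y ∂μ - ⨍ y in t, g y ∂μ| ≤ c * K := by
  set a := ⨍ z in t, g z ∂μ
  have hs_fin : μ s ≠ ∞ := ((measure_mono hst).trans_lt ht.lt_top).ne
  have hs_pos : 0 < μ.real s := ENNReal.toReal_pos hs hs_fin
  have hc_nonneg : 0 ≤ c := by
    have : μ.real s ≤ μ.real t := measureReal_mono hst ht
    nlinarith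
  have hosc_nonneg : 0 ≤ ⨍ y in t, |g y - a| ∂μ := by
    rw [setAverage_eq]
    exact smul_nonneg (inv_nonneg.2 measureReal_nonneg) (integral_nonneg fun _ => abs_nonneg _)
  have hshift : ⨍ y in s, g y ∂μ - a = ⨍ y in s, (g y - a) ∂μ := by
    rw [setAverage_eq, setAverage_eq, integral_sub (hg.mono_set hst) (integrableOn_const hs_fin),
      setIntegral_const, smul_sub, smul_smul, inv_mul_cancel₀ hs_pos.ne', one_smul]
  calc |⨍ y in s, g y ∂μ - a| = |⨍ y in s, (g y - a) ∂μ| := by rw [hshift]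
    _ ≤ (μ.real s)⁻¹ * ∫ y in t, |g y - a| ∂μ :=
      abs_setAverage_le_of_subset hst (hg.sub (integrableOn_const ht))
    _ = (μ.real s)⁻¹ * μ.real t * ⨍ y in t, |g y - a| ∂μ := by
      rw [← measure_smul_setAverage _ ht, smul_eq_mul, mul_assoc]
    _ ≤ (μ.real s)⁻¹ * (c * μ.real s) * K := by gcongr
    _ = c * K := by field_simp

lemma integral_abs_le_eLpNorm_two_mul [IsFiniteMeasure μ] (hg : MemLp g 2 μ) :
    ∫ y, |g y| ∂μ ≤ (eLpNorm g 2 μ).toReal * μ.real univ ^ (2⁻¹ : ℝ) := by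
  have holder : eLpNorm g 1 μ ≤ eLpNorm g 2 μ * μ univ ^ (2⁻¹ : ℝ) := by
    convert eLpNorm_le_eLpNorm_mul_rpow_measure_univ one_le_two hg.1 using 3
    norm_num
  have hfin : eLpNorm g 2 μ * μ univ ^ (2⁻¹ : ℝ) ≠ ∞ :=
    ENNReal.mul_ne_top hg.2.ne (ENNReal.rpow_ne_top_of_nonneg (by norm_num) (measure_ne_top _ _))
  calc ∫ y, |g y| ∂μ = (eLpNorm g 1 μ).toReal := by
        rw [eLpNorm_one_eq_lintegral_enorm, ← integral_norm_eq_lintegral_enorm hg.1]; rfl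
    _ ≤ (eLpNorm g 2 μ * μ univ ^ (2⁻¹ : ℝ)).toReal := ENNReal.toReal_mono hfin holder
    _ = _ := by rw [ENNReal.toReal_mul, ← ENNReal.toReal_rpow]; rfl

end Averages

lemma abs_sub_two_pow_mul_le {a : ℝ → ℝ} {r₀ B ρ : ℝ}
    (hstep : ∀ ρ, 0 < ρ → 2 * ρ ≤ r₀ → |a ρ - a (2 * ρ)| ≤ B) (hρ : 0 < ρ) :
    ∀ N : ℕ, 2 ^ N * ρ ≤ r₀ → |a ρ - a (2 ^ N * ρ)| ≤ N * B := by
  intro N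
  induction N with
  | zero => simp
  | succ N ih =>
    intro hN
    have hdouble : 2 ^ (N + 1) * ρ = 2 * (2 ^ N * ρ) := by ring
    have hN' : 2 ^ N * ρ ≤ r₀ := by
      refine le_trans ?_ hN
      gcongr
      · norm_num
      · omega
    calc |a ρ - a (2 ^ (N + 1) * ρ)|
        ≤ |a ρ - a (2 ^ N * ρ)| + |a (2 ^ N * ρ) - a (2 ^ (N + 1) * ρ)| := abs_sub_le _ _ _
      _ ≤ N * B + B := by
        rw [hdouble] at hN ⊢
        exact add_le_add (ih hN') (hstep _ (by positivity) hN)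
      _ = (N + 1 : ℕ) * B := by push_cast; ring

lemma natCast_le_two_mul_abs_log {N : ℕ} {r : ℝ} (hr : 0 < r) (h : 2 ^ N * r ≤ 1) :
    (N : ℝ) ≤ 2 * |Real.log r| := by
  have hlog : N * Real.log 2 + Real.log r ≤ 0 := by
    have := Real.log_nonpos (by positivity) h
    rwa [Real.log_mul (by positivity) hr.ne', Real.log_pow] at this
  have hlog2 : 1 / 2 < Real.log 2 := by linarith [Real.log_two_gt_d9]
  have hN : (0 : ℝ) ≤ N := N.cast_nonneg
  nlinarith [neg_abs_le (Real.log r)]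

section InterBall

variable {X : Type*} [PseudoMetricSpace X] [MeasurableSpace X] {μ : Measure X} {Ω : Set X}
  {x : X} {A ρ : ℝ}

lemma measure_inter_ball_ne_top [ProperSpace X] [IsFiniteMeasureOnCompacts μ] :
    μ (Ω ∩ ball x ρ) ≠ ∞ :=
  measure_inter_ne_top_of_right_ne_top measure_ball_lt_top.ne

lemma measure_inter_ball_ne_zero [OpensMeasurableSpace X] [μ.IsOpenPosMeasure] (hρ : 0 < ρ)
    (hA : μ (ball x ρ) ≤ ENNReal.ofReal A * μ (Ω ∩ ball x ρ)) : μ (Ω ∩ ball x ρ) ≠ 0 := by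
  intro h
  rw [h, mul_zero] at hA
  exact (measure_ball_pos μ x hρ).ne' (le_antisymm hA zero_le)

lemma measureReal_ball_le_mul_measureReal_inter [ProperSpace X] [IsFiniteMeasureOnCompacts μ]
    (hA₀ : 0 ≤ A) (hA : μ (ball x ρ) ≤ ENNReal.ofReal A * μ (Ω ∩ ball x ρ)) :
    μ.real (ball x ρ) ≤ A * μ.real (Ω ∩ ball x ρ) := by
  have hfin : ENNReal.ofReal A * μ (Ω ∩ ball x ρ) ≠ ∞ :=
    ENNReal.mul_ne_top ENNReal.ofReal_ne_top measure_inter_ball_ne_top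
  simpa [measureReal_def, ENNReal.toReal_mul, ENNReal.toReal_ofReal hA₀]
    using ENNReal.toReal_mono hfin hA

end InterBall

section DoublingInterBall

variable {E : Type*} [NormedAddCommGroup E] [NormedSpace ℝ E] [MeasurableSpace E] [BorelSpace E]
  [FiniteDimensional ℝ E] {μ : Measure E} [μ.IsAddHaarMeasure] {Ω : Set E} {x : E} {f : E → ℝ}
  {A K ρ : ℝ}

lemma measureReal_inter_ball_two_mul_le (hA₀ : 0 ≤ A)
    (hA : μ (ball x ρ) ≤ ENNReal.ofReal A * μ (Ω ∩ ball x ρ)) :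
    μ.real (Ω ∩ ball x (2 * ρ)) ≤ 2 ^ finrank ℝ E * A * μ.real (Ω ∩ ball x ρ) := by
  have hball : μ.real (ball x (2 * ρ)) = 2 ^ finrank ℝ E * μ.real (ball x ρ) := by
    rw [measureReal_def, Measure.addHaar_ball_mul_of_pos μ x two_pos, ENNReal.toReal_mul,
      ENNReal.toReal_ofReal (by positivity), Measure.addHaar_real_ball_center μ x]
    rfl
  calc μ.real (Ω ∩ ball x (2 * ρ)) ≤ μ.real (ball x (2 * ρ)) :=
        measureReal_mono inter_subset_right measure_ball_lt_top.ne
    _ = 2 ^ finrank ℝ E * μ.real (ball x ρ) := hball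
    _ ≤ 2 ^ finrank ℝ E * (A * μ.real (Ω ∩ ball x ρ)) := by
        gcongr; exact measureReal_ball_le_mul_measureReal_inter hA₀ hA
    _ = 2 ^ finrank ℝ E * A * μ.real (Ω ∩ ball x ρ) := by ring

lemma abs_setAverage_inter_ball_sub_two_mul_le (hA₀ : 0 ≤ A) (hρ : 0 < ρ)
    (hA : μ (ball x ρ) ≤ ENNReal.ofReal A * μ (Ω ∩ ball x ρ)) (hf : IntegrableOn f Ω μ)
    (hK : ⨍ y in Ω ∩ ball x (2 * ρ), |f y - ⨍ z in Ω ∩ ball x (2 * ρ), f z ∂μ| ∂μ ≤ K) :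
    |⨍ y in Ω ∩ ball x ρ, f y ∂μ - ⨍ y in Ω ∩ ball x (2 * ρ), f y ∂μ|
      ≤ 2 ^ finrank ℝ E * A * K :=
  abs_setAverage_sub_setAverage_le
    (inter_subset_inter_right Ω (ball_subset_ball (by linarith)))
    (measure_inter_ball_ne_zero hρ hA) measure_inter_ball_ne_top
    (hf.mono_set inter_subset_left) (measureReal_inter_ball_two_mul_le hA₀ hA) hK

lemma abs_setAverage_inter_ball_le {R : ℝ} (hA₀ : 0 ≤ A) (hρ : 0 < ρ) (hρR : ρ ≤ R)
    (hA : μ (ball x ρ) ≤ ENNReal.ofReal A * μ (Ω ∩ ball x ρ)) (hf : IntegrableOn f Ω μ) :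
    |⨍ y in Ω ∩ ball x R, f y ∂μ| ≤ A / μ.real (ball (0 : E) ρ) * ∫ y in Ω, |f y| ∂μ := by
  have hv : 0 < μ.real (ball (0 : E) ρ) :=
    ENNReal.toReal_pos (measure_ball_pos μ 0 hρ).ne' measure_ball_lt_top.ne
  have hvA : μ.real (ball (0 : E) ρ) ≤ A * μ.real (Ω ∩ ball x R) := by
    rw [← Measure.addHaar_real_ball_center μ x]
    calc μ.real (ball x ρ) ≤ A * μ.real (Ω ∩ ball x ρ) :=
          measureReal_ball_le_mul_measureReal_inter hA₀ hA
      _ ≤ A * μ.real (Ω ∩ ball x R) := by gcongr; exact measure_inter_ball_ne_top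
  have hA_pos : 0 < A := by
    by_contra! h
    nlinarith [measureReal_nonneg (μ := μ) (s := Ω ∩ ball x R)]
  have hinv : (μ.real (Ω ∩ ball x R))⁻¹ ≤ A / μ.real (ball (0 : E) ρ) := by
    rw [← inv_div]
    exact inv_anti₀ (by positivity) ((div_le_iff₀' hA_pos).2 hvA)
  calc |⨍ y in Ω ∩ ball x R, f y ∂μ| ≤ (μ.real (Ω ∩ ball x R))⁻¹ * ∫ y in Ω, |f y| ∂μ :=
        abs_setAverage_le_of_subset inter_subset_left hf
    _ ≤ A / μ.real (ball (0 : E) ρ) * ∫ y in Ω, |f y| ∂μ := by gcongr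

lemma abs_setAverage_inter_ball_le_log {r₀ r : ℝ} (hA₀ : 0 ≤ A) (hK : 0 ≤ K) (hr₀ : r₀ ≤ 1)
    (hr : 0 < r) (hrr₀ : r < r₀)
    (hAprop : ∀ ρ, 0 < ρ → ρ < r₀ → μ (ball x ρ) ≤ ENNReal.ofReal A * μ (Ω ∩ ball x ρ))
    (hBMO : ∀ ρ, 0 < ρ → ρ ≤ r₀ →
      ⨍ y in Ω ∩ ball x ρ, |f y - ⨍ z in Ω ∩ ball x ρ, f z ∂μ| ∂μ ≤ K)
    (hf : IntegrableOn f Ω μ) :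
    |⨍ y in Ω ∩ ball x r, f y ∂μ|
      ≤ 2 * |Real.log r| * (2 ^ finrank ℝ E * A * K)
        + A / μ.real (ball (0 : E) (r₀ / 2)) * ∫ y in Ω, |f y| ∂μ := by
  set a : ℝ → ℝ := fun ρ => ⨍ y in Ω ∩ ball x ρ, f y ∂μ
  obtain ⟨N, hN_le, hN_gt⟩ := exists_nat_pow_near ((one_le_div hr).2 hrr₀.le) one_lt_two
  have hR_le : 2 ^ N * r ≤ r₀ := (le_div_iff₀ hr).1 hN_le
  have hR_ge : r₀ / 2 ≤ 2 ^ N * r := by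
    rw [div_lt_iff₀ hr, pow_succ] at hN_gt; linarith
  have htele : |a r - a (2 ^ N * r)| ≤ N * (2 ^ finrank ℝ E * A * K) :=
    abs_sub_two_pow_mul_le (fun ρ hρ h2ρ => abs_setAverage_inter_ball_sub_two_mul_le hA₀ hρ
      (hAprop ρ hρ (by linarith)) hf (hBMO (2 * ρ) (by positivity) h2ρ)) hr N hR_le
  have hlarge := abs_setAverage_inter_ball_le hA₀ (by linarith) hR_ge
    (hAprop _ (by linarith) (by linarith)) hf
  have hN := natCast_le_two_mul_abs_log hr (hR_le.trans hr₀)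
  calc |a r| ≤ |a r - a (2 ^ N * r)| + |a (2 ^ N * r)| := by
        simpa using abs_sub_le (a r) (a (2 ^ N * r)) 0
    _ ≤ _ := by gcongr; exact htele.trans (by gcongr)

end DoublingInterBall

theorem stmt_7_general (n : ℕ) (Ω : Set (EuclideanSpace ℝ (Fin n)))
    (hb : Bornology.IsBounded Ω)
    (d A r₀ : ℝ)
    (hA : 1 ≤ A) (hr₀0 : 0 < r₀) (hr₀ : r₀ < min d 1)
    (hAprop : ∀ x ∈ Ω, ∀ r : ℝ, 0 < r → r < r₀ →
      volume (ball x r) ≤ ENNReal.ofReal A * volume (Ω ∩ ball x r)) :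
    ∃ C > 0, ∀ (f : EuclideanSpace ℝ (Fin n) → ℝ) (K : ℝ),
      MemLp f 2 (volume.restrict Ω) →
      0 ≤ K →
      (∀ x ∈ Ω, ∀ r : ℝ, 0 < r → r < d →
        ⨍ y in Ω ∩ ball x r, |f y - ⨍ z in Ω ∩ ball x r, f z| ≤ K) →
      ∀ x ∈ Ω, ∀ r : ℝ, 0 < r → r < r₀ →
        |⨍ y in Ω ∩ ball x r, f y|
          ≤ C * (1 + |Real.log r|)
            * ((eLpNorm f 2 (volume.restrict Ω)).toReal + K) := by
  obtain ⟨hr₀d, hr₀1⟩ := lt_min_iff.1 hr₀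
  have : IsFiniteMeasure (volume.restrict Ω) := isFiniteMeasure_restrict.2 hb.measure_lt_top.ne
  set c := 2 ^ finrank ℝ (EuclideanSpace ℝ (Fin n)) * A
  set v := volume.real (ball (0 : EuclideanSpace ℝ (Fin n)) (r₀ / 2))
  set W := (volume.restrict Ω).real univ ^ (2⁻¹ : ℝ)
  have hv : 0 < v :=
    ENNReal.toReal_pos (measure_ball_pos _ _ (by positivity)).ne' measure_ball_lt_top.ne
  refine ⟨2 * c + A / v * W, by positivity, ?_⟩
  intro f K hf hK hBMO x hx r hr hrr₀
  set Q := (eLpNorm f 2 (volume.restrict Ω)).toReal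
  have hpoint := abs_setAverage_inter_ball_le_log (by positivity) hK hr₀1.le hr hrr₀
    (hAprop x hx) (fun ρ hρ hρr₀ => hBMO x hx ρ hρ (by linarith)) (hf.integrable one_le_two)
  have hL1 : ∫ y in Ω, |f y| ≤ Q * W := integral_abs_le_eLpNorm_two_mul hf
  have hQ : 0 ≤ Q := ENNReal.toReal_nonneg
  have hc : 0 ≤ c := by positivity
  have hb : 0 ≤ A / v * W := by positivity
  have hL := abs_nonneg (Real.log r)
  nlinarith [mul_le_mul_of_nonneg_left hL1 (by positivity : 0 ≤ A / v), mul_nonneg hc hQ,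
    mul_nonneg hc hK, mul_nonneg (mul_nonneg hc hL) hQ, mul_nonneg hb hK,
    mul_nonneg (mul_nonneg hb hL) hQ, mul_nonneg (mul_nonneg hb hL) hK]

/-- Logarithmic growth of ball averages of a BMO ∩ L² function on a bounded
domain satisfying the A-property:
|f_{Ω_r(x)}| ≤ C (1 + |ln r|) (‖f‖_{L²(Ω)} + [f]_{BMO(Ω)}). -/
theorem stmt_7 (n : ℕ) (Ω : Set (EuclideanSpace ℝ (Fin n)))
    (hmeas : MeasurableSet Ω) (hb : Bornology.IsBounded Ω)
    (d A r₀ : ℝ) (hd : Metric.diam Ω = d) (hd0 : 0 < d)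
    (hA : 1 ≤ A) (hr₀0 : 0 < r₀) (hr₀ : r₀ < min d 1)
    (hAprop : ∀ x ∈ Ω, ∀ r : ℝ, 0 < r → r < r₀ →
      volume (ball x r) ≤ ENNReal.ofReal A * volume (Ω ∩ ball x r)) :
    ∃ C > 0, ∀ (f : EuclideanSpace ℝ (Fin n) → ℝ) (K : ℝ),
      MemLp f 2 (volume.restrict Ω) →
      0 ≤ K →
      (∀ x ∈ Ω, ∀ r : ℝ, 0 < r → r < d →
        ⨍ y in Ω ∩ ball x r, |f y - ⨍ z in Ω ∩ ball x r, f z| ≤ K) →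
      ∀ x ∈ Ω, ∀ r : ℝ, 0 < r → r < r₀ →
        |⨍ y in Ω ∩ ball x r, f y|
          ≤ C * (1 + |Real.log r|)
            * ((eLpNorm f 2 (volume.restrict Ω)).toReal + K) :=
  stmt_7_general n Ω hb d A r₀ hA hr₀0 hr₀ hAprop
end

section
/- Let q ∈ (3,∞), T > 0, and suppose y : [0,T) → [0,∞) is absolutely continuous with y(t) = ‖∇ρ(t)‖_{L^q}^q satisfying y'(t) ≤ C(1 + g(t) + ln(e + y(t)^{1/q})) y(t) + C h(t) y(t)^{(q−1)/q}, where g, h ∈ L¹(0,T) are nonnegative. Then sup_{t∈[0,T)} y(t) < ∞, with a bound depending only on y(0), C, q, T, ‖g‖_{L¹}, ‖h‖_{L¹}. -/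
open MeasureTheory Set Real

/-!
With `u = log (e + y)`, the differential inequality implies `u' ≤ C (3 + g + h) u`: the powers
`y ^ (1/q)` and `y ^ ((q-1)/q)` are at most `1 + y`, and `u ≥ 1` absorbs the additive constants.
Hence `log u` grows by at most `∫ C (3 + g + h)`, which gives the double-exponential bound
`y ≤ (e + y 0) ^ exp (C (3T + ‖g‖₁ + ‖h‖₁))`.
-/

lemma rpow_le_one_add_self {x a : ℝ} (hx : 0 ≤ x) (ha₀ : 0 ≤ a) (ha₁ : a ≤ 1) :
    x ^ a ≤ 1 + x := by
  rcases le_total x 1 with hx1 | hx1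
  · linarith [rpow_le_one hx hx1 ha₀]
  · linarith [(rpow_le_rpow_of_exponent_le hx1 ha₁).trans_eq (rpow_one x)]

lemma log_exp_one_add_rpow_le {x a : ℝ} (hx : 0 ≤ x) (ha₀ : 0 ≤ a) (ha₁ : a ≤ 1) :
    log (exp 1 + x ^ a) ≤ 2 * log (exp 1 + x) := by
  have he : 2 < exp 1 := by linarith [exp_one_gt_d9]
  rw [← Nat.cast_ofNat, ← log_pow]
  apply log_le_log (by positivity)
  nlinarith [rpow_le_one_add_self hx ha₀ ha₁]

lemma one_le_log_exp_one_add {x : ℝ} (hx : 0 ≤ x) : 1 ≤ log (exp 1 + x) := by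
  rw [le_log_iff_exp_le (by positivity)]
  linarith

lemma log_gronwall_rhs_le {q C g h y : ℝ} (hq : 1 ≤ q) (hC : 0 ≤ C) (hg : 0 ≤ g)
    (hh : 0 ≤ h) (hy : 0 ≤ y) :
    C * (1 + g + log (exp 1 + y ^ (1 / q))) * y + C * h * y ^ ((q - 1) / q)
      ≤ C * (3 + g + h) * ((exp 1 + y) * log (exp 1 + y)) := by
  have hq₀ : 0 < q := by linarith
  have hL : 1 ≤ log (exp 1 + y) := one_le_log_exp_one_add hy
  have he : 1 ≤ exp 1 := one_le_exp zero_le_one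
  have hlog := log_exp_one_add_rpow_le hy (a := 1 / q) (by positivity) ((div_le_one hq₀).2 hq)
  have hlog₀ : 0 ≤ log (exp 1 + y ^ (1 / q)) :=
    log_nonneg (by linarith [rpow_nonneg hy (1 / q)])
  have hpow := rpow_le_one_add_self hy (a := (q - 1) / q) (div_nonneg (by linarith) hq₀.le)
    ((div_le_one hq₀).2 (by linarith))
  have hcoeff : C * (1 + g + h + 2 * log (exp 1 + y)) ≤ C * (3 + g + h) * log (exp 1 + y) := by
    nlinarith [mul_nonneg (mul_nonneg hC (by positivity : 0 ≤ 1 + g + h)) (sub_nonneg.2 hL)]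
  calc C * (1 + g + log (exp 1 + y ^ (1 / q))) * y + C * h * y ^ ((q - 1) / q)
      ≤ C * (1 + g + 2 * log (exp 1 + y)) * (exp 1 + y) + C * h * (exp 1 + y) := by
        gcongr <;> linarith
    _ = C * (1 + g + h + 2 * log (exp 1 + y)) * (exp 1 + y) := by ring
    _ ≤ C * (3 + g + h) * log (exp 1 + y) * (exp 1 + y) := by gcongr
    _ = C * (3 + g + h) * ((exp 1 + y) * log (exp 1 + y)) := by ring

section LogGronwall

variable {y y' K : ℝ → ℝ} {a b : ℝ}

theorem log_exp_one_add_le_of_deriv_le (hab : a ≤ b) (hy : ∀ s ∈ Icc a b, 0 ≤ y s)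
    (hderiv : ∀ s ∈ Icc a b, HasDerivAt y (y' s) s) (hK : IntegrableOn K (Icc a b))
    (hle : ∀ s ∈ Ioo a b, y' s ≤ K s * ((exp 1 + y s) * log (exp 1 + y s))) :
    log (exp 1 + y b) ≤ log (exp 1 + y a) * exp (∫ s in a..b, K s) := by
  have hpos : ∀ s ∈ Icc a b, 0 < exp 1 + y s := fun s hs => by
    linarith [exp_pos 1, hy s hs]
  have hlog : ∀ s ∈ Icc a b, 0 < log (exp 1 + y s) := fun s hs =>
    zero_lt_one.trans_le (one_le_log_exp_one_add (hy s hs))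
  have hv : ∀ s ∈ Icc a b, HasDerivAt (fun s => log (log (exp 1 + y s)))
      (y' s / (exp 1 + y s) / log (exp 1 + y s)) s := fun s hs =>
    (((hderiv s hs).const_add _).log (hpos s hs).ne').log (hlog s hs).ne'
  have hv_le : ∀ s ∈ Ioo a b, y' s / (exp 1 + y s) / log (exp 1 + y s) ≤ K s := by
    intro s hs
    have hs' := Ioo_subset_Icc_self hs
    rw [div_div, div_le_iff₀ (mul_pos (hpos s hs') (hlog s hs'))]
    exact hle s hs
  have hloglog : log (log (exp 1 + y b)) - log (log (exp 1 + y a)) ≤ ∫ s in a..b, K s :=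
    intervalIntegral.sub_le_integral_of_hasDeriv_right_of_le hab
      (fun s hs => (hv s hs).continuousAt.continuousWithinAt)
      (fun s hs => (hv s (Ioo_subset_Icc_self hs)).hasDerivWithinAt) hK hv_le
  calc log (exp 1 + y b) = exp (log (log (exp 1 + y b))) :=
        (exp_log (hlog b (right_mem_Icc.2 hab))).symm
    _ ≤ exp (log (log (exp 1 + y a)) + ∫ s in a..b, K s) := exp_le_exp.2 (by linarith)
    _ = log (exp 1 + y a) * exp (∫ s in a..b, K s) := by
        rw [exp_add, exp_log (hlog a (left_mem_Icc.2 hab))]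

theorem le_rpow_exp_integral_of_deriv_le (hab : a ≤ b) (hy : ∀ s ∈ Icc a b, 0 ≤ y s)
    (hderiv : ∀ s ∈ Icc a b, HasDerivAt y (y' s) s) (hK : IntegrableOn K (Icc a b))
    (hle : ∀ s ∈ Ioo a b, y' s ≤ K s * ((exp 1 + y s) * log (exp 1 + y s))) :
    y b ≤ (exp 1 + y a) ^ exp (∫ s in a..b, K s) := by
  have hpos : ∀ s ∈ Icc a b, 0 < exp 1 + y s := fun s hs => by
    linarith [exp_pos 1, hy s hs]
  calc y b ≤ exp 1 + y b := by linarith [exp_pos 1]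
    _ = exp (log (exp 1 + y b)) := (exp_log (hpos b (right_mem_Icc.2 hab))).symm
    _ ≤ exp (log (exp 1 + y a) * exp (∫ s in a..b, K s)) :=
        exp_le_exp.2 (log_exp_one_add_le_of_deriv_le hab hy hderiv hK hle)
    _ = (exp 1 + y a) ^ exp (∫ s in a..b, K s) :=
        (rpow_def_of_pos (hpos a (left_mem_Icc.2 hab)) _).symm

end LogGronwall

lemma intervalIntegral_le_integral_Ioo_of_nonneg {f : ℝ → ℝ} {a t b : ℝ} (hat : a ≤ t)
    (htb : t ≤ b) (hf : IntegrableOn f (Ioo a b)) (hf₀ : ∀ s ∈ Ioo a b, 0 ≤ f s) :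
    ∫ s in a..t, f s ≤ ∫ s in Ioo a b, f s := by
  rw [intervalIntegral.integral_of_le hat, integral_Ioc_eq_integral_Ioo]
  exact setIntegral_mono_set hf ((ae_restrict_iff' measurableSet_Ioo).2 (ae_of_all _ hf₀))
    (Ioo_subset_Ioo_right htb).eventuallyLE

lemma integral_Ioo_mul_const_add_add {f g : ℝ → ℝ} {a b : ℝ} (hab : a ≤ b) (C c : ℝ)
    (hf : IntegrableOn f (Ioo a b)) (hg : IntegrableOn g (Ioo a b)) :
    ∫ s in Ioo a b, C * (c + f s + g s)
      = C * (c * (b - a) + (∫ s in Ioo a b, f s) + ∫ s in Ioo a b, g s) := by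
  have hc : IntegrableOn (fun _ => c) (Ioo a b) := integrableOn_const measure_Ioo_lt_top.ne
  rw [integral_const_mul, integral_add (f := fun s => c + f s) (hc.add hf) hg,
    integral_add hc hf, setIntegral_const]
  simp [measureReal_def, Real.volume_Ioo, sub_nonneg.2 hab, mul_comm]

theorem stmt_17_general (q C T y₀ G H : ℝ) (hq : 3 < q) (hC : 0 < C) :
    ∃ B : ℝ, ∀ (y y' g h : ℝ → ℝ),
      (∀ t ∈ Set.Ico (0 : ℝ) T, 0 ≤ y t) →
      (∀ t ∈ Set.Ico (0 : ℝ) T, HasDerivAt y (y' t) t) →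
      (∀ t ∈ Set.Ico (0 : ℝ) T, 0 ≤ g t) →
      (∀ t ∈ Set.Ico (0 : ℝ) T, 0 ≤ h t) →
      IntegrableOn g (Set.Ioo 0 T) → IntegrableOn h (Set.Ioo 0 T) →
      (∫ t in Set.Ioo (0 : ℝ) T, g t) ≤ G →
      (∫ t in Set.Ioo (0 : ℝ) T, h t) ≤ H →
      y 0 ≤ y₀ →
      (∀ t ∈ Set.Ico (0 : ℝ) T,
        y' t ≤ C * (1 + g t + Real.log (Real.exp 1 + y t ^ (1 / q))) * y t
          + C * h t * y t ^ ((q - 1) / q)) →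
      ∀ t ∈ Set.Ico (0 : ℝ) T, y t ≤ B := by
  refine ⟨(exp 1 + y₀) ^ exp (C * (3 * T + G + H)), ?_⟩
  intro y y' g h hy hy' hg hh hgi hhi hgG hhH hy0 hineq t ht
  have hsub : Icc 0 t ⊆ Ico 0 T := Icc_subset_Ico_right ht.2
  have hKi : IntegrableOn (fun s => C * (3 + g s + h s)) (Ioo 0 T) :=
    (((integrableOn_const measure_Ioo_lt_top.ne).add hgi).add hhi).const_mul C
  have hbound := le_rpow_exp_integral_of_deriv_le ht.1 (fun s hs => hy s (hsub hs))
    (fun s hs => hy' s (hsub hs))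
    ((integrableOn_Icc_iff_integrableOn_Ioo).2 (hKi.mono_set (Ioo_subset_Ioo_right ht.2.le)))
    fun s hs => have hs' := hsub (Ioo_subset_Icc_self hs)
      (hineq s hs').trans (log_gronwall_rhs_le (by linarith) hC.le (hg s hs') (hh s hs') (hy s hs'))
  have hintegral : ∫ s in (0 : ℝ)..t, C * (3 + g s + h s) ≤ C * (3 * T + G + H) :=
    calc ∫ s in (0 : ℝ)..t, C * (3 + g s + h s)
        ≤ ∫ s in Ioo 0 T, C * (3 + g s + h s) :=
          intervalIntegral_le_integral_Ioo_of_nonneg ht.1 ht.2.le hKi fun s hs => by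
            have := hg s (Ioo_subset_Ico_self hs); have := hh s (Ioo_subset_Ico_self hs)
            positivity
      _ = C * (3 * (T - 0) + (∫ s in Ioo 0 T, g s) + ∫ s in Ioo 0 T, h s) :=
          integral_Ioo_mul_const_add_add (ht.1.trans ht.2.le) C 3 hgi hhi
      _ ≤ C * (3 * T + G + H) := by rw [sub_zero]; gcongr
  have hbase : 1 ≤ exp 1 + y 0 := by
    linarith [one_le_exp zero_le_one, hy 0 (hsub (left_mem_Icc.2 ht.1))]
  calc y t ≤ (exp 1 + y 0) ^ exp (∫ s in (0 : ℝ)..t, C * (3 + g s + h s)) := hbound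
    _ ≤ (exp 1 + y 0) ^ exp (C * (3 * T + G + H)) :=
        rpow_le_rpow_of_exponent_le hbase (exp_le_exp.2 hintegral)
    _ ≤ (exp 1 + y₀) ^ exp (C * (3 * T + G + H)) :=
        rpow_le_rpow (by linarith) (by linarith) (exp_pos _).le

/-- Logarithmic Gronwall inequality (Section 5): a nonnegative y satisfying
y' ≤ C(1 + g + ln(e + y^{1/q})) y + C h y^{(q−1)/q} with g, h ∈ L¹(0,T)
stays bounded on [0,T), by a constant depending only on y(0) (≤ y₀), C, q, T,
‖g‖_{L¹} (≤ G), ‖h‖_{L¹} (≤ H). -/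
theorem stmt_17 (q C T y₀ G H : ℝ) (hq : 3 < q) (hT : 0 < T) (hC : 0 < C) :
    ∃ B : ℝ, ∀ (y y' g h : ℝ → ℝ),
      (∀ t ∈ Set.Ico (0 : ℝ) T, 0 ≤ y t) →
      (∀ t ∈ Set.Ico (0 : ℝ) T, HasDerivAt y (y' t) t) →
      (∀ t ∈ Set.Ico (0 : ℝ) T, 0 ≤ g t) →
      (∀ t ∈ Set.Ico (0 : ℝ) T, 0 ≤ h t) →
      IntegrableOn g (Set.Ioo 0 T) → IntegrableOn h (Set.Ioo 0 T) →
      (∫ t in Set.Ioo (0 : ℝ) T, g t) ≤ G →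
      (∫ t in Set.Ioo (0 : ℝ) T, h t) ≤ H →
      y 0 ≤ y₀ →
      (∀ t ∈ Set.Ico (0 : ℝ) T,
        y' t ≤ C * (1 + g t + Real.log (Real.exp 1 + y t ^ (1 / q))) * y t
          + C * h t * y t ^ ((q - 1) / q)) →
      ∀ t ∈ Set.Ico (0 : ℝ) T, y t ≤ B :=
  stmt_17_general q C T y₀ G H hq hC
end
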